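/- Let D be a division ring and let n ≥ 2. Let b(i,j) ∈ D be given for row indices i ∈ {1,…,n} and column indices j ∈ {0,1,…,n}, and assume that entries from different rows commute: b(i,j)·b(k,l) = b(k,l)·b(i,j) whenever i ≠ k. For each i ∈ {0,1,…,n} let M^i denote the Cartier–Foata determinant of the n×n matrix obtained by deleting column i, i.e. M^i = Σ_σ sgn(σ) b(1,σ(1))·b(2,σ(2))⋯b(n,σ(n)), where σ ranges over all bijections from {1,…,n} to {0,…,n}∖{i} and sgn(σ) is the sign of σ computed via the order-preserving identification of {0,…,n}∖{i} with {1,…,n}. Then if M^0 ≠ 0, the elements H_i = (M^0)^{-1}·M^i, for i = 1,…,n, pairwise commute: H_i·H_j = H_j·H_i for all i,j. -/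

import Mathlib

/-- The Cartier–Foata determinant of the `n × n` matrix obtained from the
`n × (n+1)` matrix `b` by deleting column `i`: the sum over all permutations
`σ` of `Fin n` (which parametrize, via the order-preserving identification
`i.succAbove`, the bijections from rows to the columns `≠ i`) of the signed
ordered product of entries, one from each row in increasing row order. -/
noncomputable def cartierFoataDet {D : Type*} [Ring D] {n : ℕ}
    (b : Fin n → Fin (n + 1) → D) (i : Fin (n + 1)) : D :=
  ∑ σ : Equiv.Perm (Fin n),
    ((Equiv.Perm.sign σ : ℤ) : D) *
      (List.ofFn fun r : Fin n => b r (i.succAbove (σ r))).prod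

namespace CFProof

open MvPolynomial Matrix Finset

section ListHelpers

variable {D : Type*} [Monoid D]

lemma listProd_eq_single {M : ℕ} (g : Fin M → D) (j₀ : Fin M)
    (h : ∀ j, j ≠ j₀ → g j = 1) : (List.ofFn g).prod = g j₀ := by
  induction M with
  | zero => exact j₀.elim0
  | succ M ih =>
    rw [List.ofFn_succ, List.prod_cons]
    rcases Fin.eq_zero_or_eq_succ j₀ with h0 | ⟨j', rfl⟩
    · subst h0
      have h1 : (List.ofFn fun i : Fin M => g i.succ).prod = 1 := by
        apply List.prod_eq_one
        intro x hx
        rw [List.mem_ofFn] at hx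
        obtain ⟨i, rfl⟩ := hx
        exact h _ (Fin.succ_ne_zero i)
      rw [h1, mul_one]
    · rw [h 0 (Ne.symm (Fin.succ_ne_zero j')), one_mul]
      exact ih (fun i => g i.succ) j' fun j hj =>
        h _ (by simpa [Fin.succ_inj] using hj)

lemma listProd_extract {M : ℕ} (g : Fin (M + 1) → D) (k : Fin (M + 1))
    (hc : ∀ r : Fin M, Commute (g (k.succAbove r)) (g k)) :
    (List.ofFn g).prod = (List.ofFn fun r => g (k.succAbove r)).prod * g k := by
  induction M with
  | zero =>
    have hk : k = 0 := Fin.fin_one_eq_zero k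
    subst hk
    simp
  | succ M ih =>
    rcases Fin.eq_zero_or_eq_succ k with rfl | ⟨k', rfl⟩
    · rw [List.ofFn_succ, List.prod_cons]
      have hcomm : Commute (g 0) ((List.ofFn fun i : Fin (M+1) => g i.succ).prod) := by
        refine (Commute.list_prod_right _ _ ?_)
        intro y hy
        rw [List.mem_ofFn] at hy
        obtain ⟨i, rfl⟩ := hy
        exact (hc i).symm
      rw [hcomm.eq]
      rfl
    · have hext : (List.ofFn fun r : Fin (M+1) => g ((k'.succ).succAbove r)) =
          g 0 :: List.ofFn fun r : Fin M => g ((k'.succAbove r).succ) := by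
        rw [List.ofFn_succ]
        congr 1
        · simp
      have ihyp : ∀ r : Fin M,
          Commute ((fun i : Fin (M+1) => g i.succ) (k'.succAbove r))
            ((fun i : Fin (M+1) => g i.succ) k') := by
        intro r
        have := hc r.succ
        rwa [Fin.succ_succAbove_succ] at this
      rw [List.ofFn_succ, List.prod_cons, ih (fun i => g i.succ) k' ihyp, hext, List.prod_cons,
        mul_assoc]

end ListHelpers


section Transfer

variable {D : Type*} [Ring D] {m : ℕ} (b : Fin (m + 1) → Fin (m + 2) → D)

/-- The row-then-column-ordered monomial evaluation. -/
def ordProd (E : (Fin (m + 1) × Fin (m + 2)) →₀ ℕ) : D :=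
  (List.ofFn fun r : Fin (m + 1) =>
    (List.ofFn fun j : Fin (m + 2) => b r j ^ E (r, j)).prod).prod

/-- The "row-ordered evaluation" function from polynomials to `D`. -/
def phiFun (p : MvPolynomial (Fin (m + 1) × Fin (m + 2)) ℤ) : D :=
  (AddMonoidAlgebra.coeff p).sum fun E c => c • ordProd b E

lemma phiFun_add (p q : MvPolynomial (Fin (m + 1) × Fin (m + 2)) ℤ) :
    phiFun b (p + q) = phiFun b p + phiFun b q := by
  classical
  exact Finsupp.sum_add_index (fun E _ => zero_smul ℤ (ordProd b E))
    (fun E _ c₁ c₂ => add_smul c₁ c₂ (ordProd b E))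

/-- The additive "row-ordered evaluation" map from polynomials to `D`. -/
noncomputable def PhiHom : MvPolynomial (Fin (m + 1) × Fin (m + 2)) ℤ →+ D where
  toFun := phiFun b
  map_zero' := Finsupp.sum_zero_index
  map_add' := phiFun_add b

lemma PhiHom_monomial (E : (Fin (m + 1) × Fin (m + 2)) →₀ ℕ) (c : ℤ) :
    PhiHom b (MvPolynomial.monomial E c) = c • ordProd b E := by
  show phiFun b _ = _
  exact MvPolynomial.sum_monomial_eq (zero_smul ℤ _)

lemma prodX_eq_monomial {ι : Type*} (s : Finset ι)
    (f : ι → Fin (m + 1) × Fin (m + 2)) :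
    (∏ r ∈ s, (MvPolynomial.X (f r) : MvPolynomial (Fin (m + 1) × Fin (m + 2)) ℤ)) =
      MvPolynomial.monomial (∑ r ∈ s, Finsupp.single (f r) 1) 1 := by
  classical
  induction s using Finset.cons_induction with
  | empty => simp
  | cons a s ha ih =>
    rw [Finset.prod_cons, Finset.sum_cons, ih, MvPolynomial.X,
      MvPolynomial.monomial_mul, one_mul]

end Transfer

section Transfer2

variable {D : Type*} [Ring D] {m : ℕ} (b : Fin (m + 1) → Fin (m + 2) → D)

lemma ordProd_rows (E : (Fin (m + 1) × Fin (m + 2)) →₀ ℕ) (d : Fin (m + 1) → Fin (m + 2))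
    (h : ∀ row j, E (row, j) = if j = d row then 1 else 0) :
    ordProd b E = (List.ofFn fun r => b r (d r)).prod := by
  have hinner : ∀ row : Fin (m + 1),
      (List.ofFn fun j => b row j ^ E (row, j)).prod = b row (d row) := by
    intro row
    rw [listProd_eq_single (fun j => b row j ^ E (row, j)) (d row)
      (fun j hj => show b row j ^ E (row, j) = 1 by rw [h, if_neg hj, pow_zero])]
    show b row (d row) ^ E (row, d row) = b row (d row)
    rw [h, if_pos rfl, pow_one]
  show (List.ofFn fun row : Fin (m + 1) =>
      (List.ofFn fun j => b row j ^ E (row, j)).prod).prod = _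
  rw [show (fun row : Fin (m + 1) => (List.ofFn fun j => b row j ^ E (row, j)).prod)
      = fun row => b row (d row) from funext hinner]

lemma ordProd_minor (E : (Fin (m + 1) × Fin (m + 2)) →₀ ℕ) (k : Fin (m + 1))
    (c : Fin m → Fin (m + 2))
    (hk : ∀ j', E (k, j') = 0)
    (hs : ∀ (r : Fin m) j', E (k.succAbove r, j') = if j' = c r then 1 else 0) :
    ordProd b E = (List.ofFn fun r : Fin m => b (k.succAbove r) (c r)).prod := by
  have hgk : (List.ofFn fun j' => b k j' ^ E (k, j')).prod = 1 := by
    apply List.prod_eq_one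
    intro x hx
    rw [List.mem_ofFn] at hx
    obtain ⟨j', rfl⟩ := hx
    show b k j' ^ E (k, j') = 1
    rw [hk, pow_zero]
  have hgs : ∀ r : Fin m,
      (List.ofFn fun j' => b (k.succAbove r) j' ^ E (k.succAbove r, j')).prod
        = b (k.succAbove r) (c r) := by
    intro r
    rw [listProd_eq_single (fun j' => b (k.succAbove r) j' ^ E (k.succAbove r, j')) (c r)
      (fun j hj => show b (k.succAbove r) j ^ E (k.succAbove r, j) = 1 by
        rw [hs, if_neg hj, pow_zero])]
    show b (k.succAbove r) (c r) ^ E (k.succAbove r, c r) = b (k.succAbove r) (c r)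
    rw [hs, if_pos rfl, pow_one]
  have hext := listProd_extract
    (fun row : Fin (m + 1) => (List.ofFn fun j' => b row j' ^ E (row, j')).prod) k
    (fun r => by
      show Commute ((List.ofFn fun j' => b (k.succAbove r) j' ^ E (k.succAbove r, j')).prod)
        ((List.ofFn fun j' => b k j' ^ E (k, j')).prod)
      rw [hgk]
      exact Commute.one_right _)
  show (List.ofFn fun row : Fin (m + 1) =>
      (List.ofFn fun j' => b row j' ^ E (row, j')).prod).prod = _
  rw [hext]
  show _ * (List.ofFn fun j' => b k j' ^ E (k, j')).prod = _
  rw [hgk, mul_one,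
    show (fun r : Fin m =>
        (List.ofFn fun j' => b (k.succAbove r) j' ^ E (k.succAbove r, j')).prod)
      = fun r => b (k.succAbove r) (c r) from funext hgs]

lemma ordProd_minor_mul
    (hcomm : ∀ i k : Fin (m + 1), i ≠ k → ∀ j l : Fin (m + 2),
      b i j * b k l = b k l * b i j)
    (E : (Fin (m + 1) × Fin (m + 2)) →₀ ℕ) (k : Fin (m + 1))
    (c : Fin m → Fin (m + 2)) (j : Fin (m + 2))
    (hk : ∀ j', E (k, j') = if j' = j then 1 else 0)
    (hs : ∀ (r : Fin m) j', E (k.succAbove r, j') = if j' = c r then 1 else 0) :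
    ordProd b E = (List.ofFn fun r : Fin m => b (k.succAbove r) (c r)).prod * b k j := by
  have hgk : (List.ofFn fun j' => b k j' ^ E (k, j')).prod = b k j := by
    rw [listProd_eq_single (fun j' => b k j' ^ E (k, j')) j
      (fun j' hj' => show b k j' ^ E (k, j') = 1 by rw [hk, if_neg hj', pow_zero])]
    show b k j ^ E (k, j) = b k j
    rw [hk, if_pos rfl, pow_one]
  have hgs : ∀ r : Fin m,
      (List.ofFn fun j' => b (k.succAbove r) j' ^ E (k.succAbove r, j')).prod
        = b (k.succAbove r) (c r) := by
    intro r
    rw [listProd_eq_single (fun j' => b (k.succAbove r) j' ^ E (k.succAbove r, j')) (c r)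
      (fun j' hj' => show b (k.succAbove r) j' ^ E (k.succAbove r, j') = 1 by
        rw [hs, if_neg hj', pow_zero])]
    show b (k.succAbove r) (c r) ^ E (k.succAbove r, c r) = b (k.succAbove r) (c r)
    rw [hs, if_pos rfl, pow_one]
  have hext := listProd_extract
    (fun row : Fin (m + 1) => (List.ofFn fun j' => b row j' ^ E (row, j')).prod) k
    (fun r => by
      show Commute ((List.ofFn fun j' => b (k.succAbove r) j' ^ E (k.succAbove r, j')).prod)
        ((List.ofFn fun j' => b k j' ^ E (k, j')).prod)
      rw [hgk, hgs]
      show _ * _ = _ * _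
      exact hcomm _ _ (Fin.succAbove_ne k r) _ _)
  show (List.ofFn fun row : Fin (m + 1) =>
      (List.ofFn fun j' => b row j' ^ E (row, j')).prod).prod = _
  rw [hext]
  show _ * (List.ofFn fun j' => b k j' ^ E (k, j')).prod = _
  rw [hgk,
    show (fun r : Fin m =>
        (List.ofFn fun j' => b (k.succAbove r) j' ^ E (k.succAbove r, j')).prod)
      = fun r => b (k.succAbove r) (c r) from funext hgs]

lemma sum_single_row_apply (d : Fin (m + 1) → Fin (m + 2)) (row : Fin (m + 1))
    (j : Fin (m + 2)) :
    (∑ r, Finsupp.single ((r, d r) : Fin (m + 1) × Fin (m + 2)) (1 : ℕ)) (row, j)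
      = if j = d row then 1 else 0 := by
  classical
  rw [Finset.sum_apply']
  rw [Finset.sum_eq_single row (fun r _ hr => by
      rw [Finsupp.single_apply, if_neg]
      intro hc
      exact hr (congrArg Prod.fst hc))
    (fun h => absurd (Finset.mem_univ row) h)]
  rw [Finsupp.single_apply]
  by_cases h : j = d row
  · subst h; rw [if_pos rfl, if_pos rfl]
  · rw [if_neg (fun hc => h (congrArg Prod.snd hc).symm), if_neg h]

lemma sum_single_minor_apply_k (k : Fin (m + 1)) (c : Fin m → Fin (m + 2))
    (j' : Fin (m + 2)) :
    (∑ r : Fin m, Finsupp.single ((k.succAbove r, c r) : Fin (m + 1) × Fin (m + 2)) (1 : ℕ))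
      (k, j') = 0 := by
  classical
  rw [Finset.sum_apply']
  apply Finset.sum_eq_zero
  intro r _
  rw [Finsupp.single_apply, if_neg]
  intro hc
  exact Fin.succAbove_ne k r (congrArg Prod.fst hc)

lemma sum_single_minor_apply_s (k : Fin (m + 1)) (c : Fin m → Fin (m + 2)) (r : Fin m)
    (j' : Fin (m + 2)) :
    (∑ r' : Fin m, Finsupp.single ((k.succAbove r', c r') : Fin (m + 1) × Fin (m + 2)) (1 : ℕ))
      (k.succAbove r, j') = if j' = c r then 1 else 0 := by
  classical
  rw [Finset.sum_apply']
  rw [Finset.sum_eq_single r (fun r' _ hr' => by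
      rw [Finsupp.single_apply, if_neg]
      intro hc
      exact hr' (Fin.succAbove_right_injective (congrArg Prod.fst hc)))
    (fun h => absurd (Finset.mem_univ r) h)]
  rw [Finsupp.single_apply]
  by_cases h : j' = c r
  · subst h; rw [if_pos rfl, if_pos rfl]
  · rw [if_neg (fun hc => h (congrArg Prod.snd hc).symm), if_neg h]

lemma det_eq_sum_perm {R : Type*} [CommRing R] {M : ℕ} (A : Matrix (Fin M) (Fin M) R) :
    A.det = ∑ σ : Equiv.Perm (Fin M), Equiv.Perm.sign σ • ∏ i, A i (σ i) := by
  rw [← Matrix.det_transpose, Matrix.det_apply]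
  refine Finset.sum_congr rfl fun σ _ => ?_
  congr 1

lemma phi_det_full (γ : Fin (m + 1) → Fin (m + 2)) :
    PhiHom b (Matrix.of fun r s : Fin (m + 1) =>
        (MvPolynomial.X (r, γ s) : MvPolynomial (Fin (m + 1) × Fin (m + 2)) ℤ)).det =
      ∑ σ : Equiv.Perm (Fin (m + 1)),
        ((Equiv.Perm.sign σ : ℤ) : D) * (List.ofFn fun r => b r (γ (σ r))).prod := by
  rw [det_eq_sum_perm, map_sum]
  refine Finset.sum_congr rfl fun σ _ => ?_
  rw [Units.smul_def, map_zsmul]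
  have h1 : (∏ i, (Matrix.of fun r s : Fin (m + 1) =>
      (MvPolynomial.X (r, γ s) : MvPolynomial (Fin (m + 1) × Fin (m + 2)) ℤ)) i (σ i))
      = ∏ i, (MvPolynomial.X (i, γ (σ i)) : MvPolynomial (Fin (m + 1) × Fin (m + 2)) ℤ) := rfl
  rw [h1, prodX_eq_monomial, PhiHom_monomial, one_smul,
    ordProd_rows b _ (fun i => γ (σ i)) (fun row j => sum_single_row_apply _ row j),
    zsmul_eq_mul]

lemma phi_det_minor (k : Fin (m + 1)) (γ : Fin m → Fin (m + 2)) :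
    PhiHom b (Matrix.of fun r s : Fin m =>
        (MvPolynomial.X (k.succAbove r, γ s) : MvPolynomial (Fin (m + 1) × Fin (m + 2)) ℤ)).det =
      ∑ τ : Equiv.Perm (Fin m),
        ((Equiv.Perm.sign τ : ℤ) : D) *
          (List.ofFn fun r => b (k.succAbove r) (γ (τ r))).prod := by
  rw [det_eq_sum_perm, map_sum]
  refine Finset.sum_congr rfl fun τ _ => ?_
  rw [Units.smul_def, map_zsmul]
  have h1 : (∏ i, (Matrix.of fun r s : Fin m =>
      (MvPolynomial.X (k.succAbove r, γ s) : MvPolynomial (Fin (m + 1) × Fin (m + 2)) ℤ)) i (τ i))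
      = ∏ i, (MvPolynomial.X (k.succAbove i, γ (τ i)) :
          MvPolynomial (Fin (m + 1) × Fin (m + 2)) ℤ) := rfl
  rw [h1, prodX_eq_monomial, PhiHom_monomial, one_smul,
    ordProd_minor b _ k (fun i => γ (τ i)) (fun j' => sum_single_minor_apply_k k _ j')
      (fun r j' => sum_single_minor_apply_s k _ r j'),
    zsmul_eq_mul]

lemma phi_det_minor_mul
    (hcomm : ∀ i k : Fin (m + 1), i ≠ k → ∀ j l : Fin (m + 2),
      b i j * b k l = b k l * b i j)
    (k : Fin (m + 1)) (γ : Fin m → Fin (m + 2)) (j : Fin (m + 2)) :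
    PhiHom b ((Matrix.of fun r s : Fin m =>
        (MvPolynomial.X (k.succAbove r, γ s) : MvPolynomial (Fin (m + 1) × Fin (m + 2)) ℤ)).det
        * MvPolynomial.X (k, j)) =
      PhiHom b (Matrix.of fun r s : Fin m =>
        (MvPolynomial.X (k.succAbove r, γ s) : MvPolynomial (Fin (m + 1) × Fin (m + 2)) ℤ)).det
        * b k j := by
  rw [phi_det_minor, Finset.sum_mul]
  rw [det_eq_sum_perm, Finset.sum_mul, map_sum]
  refine Finset.sum_congr rfl fun τ _ => ?_
  rw [Units.smul_def, smul_mul_assoc, map_zsmul]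
  have h1 : (∏ i, (Matrix.of fun r s : Fin m =>
      (MvPolynomial.X (k.succAbove r, γ s) : MvPolynomial (Fin (m + 1) × Fin (m + 2)) ℤ)) i (τ i))
      = ∏ i, (MvPolynomial.X (k.succAbove i, γ (τ i)) :
          MvPolynomial (Fin (m + 1) × Fin (m + 2)) ℤ) := rfl
  rw [h1, prodX_eq_monomial, MvPolynomial.X, MvPolynomial.monomial_mul, one_mul,
    PhiHom_monomial, one_smul]
  rw [ordProd_minor_mul b hcomm _ k (fun i => γ (τ i)) j
      (fun j' => by
        rw [Finsupp.add_apply, sum_single_minor_apply_k k _ j', zero_add, Finsupp.single_apply]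
        by_cases h : j' = j
        · subst h; rw [if_pos rfl, if_pos rfl]
        · rw [if_neg (fun hc => h (congrArg Prod.snd hc).symm), if_neg h])
      (fun r j' => by
        rw [Finsupp.add_apply, sum_single_minor_apply_s k _ r j', Finsupp.single_apply,
          if_neg (fun hc => Fin.succAbove_ne k r (congrArg Prod.fst hc).symm), add_zero])]
  rw [zsmul_eq_mul, mul_assoc]

end Transfer2

section PSide

variable {m : ℕ}

/-- Generic polynomial matrix with columns `p.succAbove`. -/
noncomputable def XM (p : Fin (m + 2)) :
    Matrix (Fin (m + 1)) (Fin (m + 1)) (MvPolynomial (Fin (m + 1) × Fin (m + 2)) ℤ) :=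
  Matrix.of fun r s => MvPolynomial.X (r, p.succAbove s)

/-- Generic cofactor matrix: delete row `k` and column `t`. -/
noncomputable def cofM (p : Fin (m + 2)) (t k : Fin (m + 1)) :
    Matrix (Fin m) (Fin m) (MvPolynomial (Fin (m + 1) × Fin (m + 2)) ℤ) :=
  Matrix.of fun r s => MvPolynomial.X (k.succAbove r, p.succAbove (t.succAbove s))

lemma XM_submatrix (p : Fin (m + 2)) (t k : Fin (m + 1)) :
    (XM p).submatrix k.succAbove t.succAbove = cofM p t k := rfl

lemma adj_identity_P (p : Fin (m + 2)) (t s : Fin (m + 1)) :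
    ∑ k : Fin (m + 1), ((-1 : ℤ) ^ ((k : ℕ) + (t : ℕ))) • ((cofM p t k).det * MvPolynomial.X (k, p.succAbove s))
      = if t = s then (XM p).det else 0 := by
  rcases eq_or_ne t s with rfl | hts
  · rw [if_pos rfl, Matrix.det_succ_column (XM p) t]
    refine Finset.sum_congr rfl fun k _ => ?_
    rw [← XM_submatrix, zsmul_eq_mul]
    have hXM : XM p k t = MvPolynomial.X (k, p.succAbove t) := rfl
    rw [hXM]
    push_cast
    ring
  · rw [if_neg hts]
    have hcols : ∀ i, ((XM p).updateCol t fun i => MvPolynomial.X (i, p.succAbove s)) i t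
        = ((XM p).updateCol t fun i => MvPolynomial.X (i, p.succAbove s)) i s := by
      intro i
      rw [Matrix.updateCol_self, Matrix.updateCol_ne hts.symm]
      rfl
    have hdet : ((XM p).updateCol t fun i => MvPolynomial.X (i, p.succAbove s)).det = 0 :=
      Matrix.det_zero_of_column_eq hts hcols
    have hsub : ∀ k : Fin (m + 1),
        ((XM p).updateCol t fun i => MvPolynomial.X (i, p.succAbove s)).submatrix
          k.succAbove t.succAbove = cofM p t k := by
      intro k
      ext r c
      rw [Matrix.submatrix_apply, Matrix.updateCol_ne (Fin.succAbove_ne t c)]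
      rfl
    calc ∑ k : Fin (m + 1), ((-1 : ℤ) ^ ((k : ℕ) + (t : ℕ))) •
          ((cofM p t k).det * MvPolynomial.X (k, p.succAbove s))
        = ∑ k : Fin (m + 1), (-1 : MvPolynomial (Fin (m + 1) × Fin (m + 2)) ℤ) ^ ((k : ℕ) + (t : ℕ)) *
            ((XM p).updateCol t fun i => MvPolynomial.X (i, p.succAbove s)) k t *
            (((XM p).updateCol t fun i => MvPolynomial.X (i, p.succAbove s)).submatrix
              k.succAbove t.succAbove).det := by
          refine Finset.sum_congr rfl fun k _ => ?_
          rw [hsub, Matrix.updateCol_self, zsmul_eq_mul]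
          push_cast
          ring
      _ = 0 := by rw [← Matrix.det_succ_column _ t, hdet]

end PSide

section PSide2

variable {m : ℕ}

lemma succAbove_succAbove_key {j₀ p : Fin (m + 2)} {t r₀ : Fin (m + 1)}
    (hj₀ : p.succAbove t = j₀) (hr₀ : j₀.succAbove r₀ = p) (u : Fin m) :
    j₀.succAbove (r₀.succAbove u) = p.succAbove (t.succAbove u) := by
  have hne : p ≠ j₀ := fun h => Fin.succAbove_ne p t (hj₀.trans h.symm)
  have hf : StrictMono (fun u : Fin m => j₀.succAbove (r₀.succAbove u)) :=
    (Fin.strictMono_succAbove j₀).comp (Fin.strictMono_succAbove r₀)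
  have hg : StrictMono (fun u : Fin m => p.succAbove (t.succAbove u)) :=
    (Fin.strictMono_succAbove p).comp (Fin.strictMono_succAbove t)
  have hrange : Set.range (fun u : Fin m => j₀.succAbove (r₀.succAbove u))
      = Set.range (fun u : Fin m => p.succAbove (t.succAbove u)) := by
    ext x
    simp only [Set.mem_range]
    constructor
    · rintro ⟨u, rfl⟩
      have hx1 : j₀.succAbove (r₀.succAbove u) ≠ j₀ := Fin.succAbove_ne _ _
      have hx2 : j₀.succAbove (r₀.succAbove u) ≠ p := by
        intro h
        rw [← hr₀] at h
        exact Fin.succAbove_ne r₀ u (Fin.succAbove_right_injective h)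
      obtain ⟨w, hw⟩ := Fin.exists_succAbove_eq hx2
      have hwt : w ≠ t := by
        intro h
        apply hx1
        rw [← hw, h, hj₀]
      obtain ⟨v, hv⟩ := Fin.exists_succAbove_eq hwt
      exact ⟨v, by rw [hv, hw]⟩
    · rintro ⟨u, rfl⟩
      have hx1 : p.succAbove (t.succAbove u) ≠ p := Fin.succAbove_ne _ _
      have hx2 : p.succAbove (t.succAbove u) ≠ j₀ := by
        intro h
        rw [← hj₀] at h
        exact Fin.succAbove_ne t u (Fin.succAbove_right_injective h)
      obtain ⟨w, hw⟩ := Fin.exists_succAbove_eq hx2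
      have hwr : w ≠ r₀ := by
        intro h
        apply hx1
        rw [← hw, h, hr₀]
      obtain ⟨v, hv⟩ := Fin.exists_succAbove_eq hwr
      exact ⟨v, by rw [hv, hw]⟩
  haveI : WellFoundedLT (Fin m) := Finite.to_wellFoundedLT
  have := (hf.range_inj hg).mp hrange
  exact congrFun this u

lemma sign_parity_key {j₀ p : Fin (m + 2)} {t r₀ : Fin (m + 1)}
    (hj₀ : p.succAbove t = j₀) (hr₀ : j₀.succAbove r₀ = p) :
    ((-1 : ℤ) ^ ((r₀ : ℕ) + (t : ℕ))) = (-1 : ℤ) ^ ((p : ℕ) + (j₀ : ℕ) + 1) := by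
  have hfacts : ((j₀ : ℕ) = t ∧ (r₀ : ℕ) + 1 = p) ∨ ((j₀ : ℕ) = (t : ℕ) + 1 ∧ (r₀ : ℕ) = p) := by
    rcases lt_or_ge (Fin.castSucc t) p with h | h
    · have h1 : p.succAbove t = Fin.castSucc t := Fin.succAbove_of_castSucc_lt p t h
      have hj : (j₀ : ℕ) = t := by rw [← hj₀, h1]; rfl
      rcases lt_or_ge (Fin.castSucc r₀) j₀ with h2 | h2
      · exfalso
        have h3 : j₀.succAbove r₀ = Fin.castSucc r₀ := Fin.succAbove_of_castSucc_lt j₀ r₀ h2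
        rw [h3] at hr₀
        have hv1 : (r₀ : ℕ) = p := by rw [← hr₀]; rfl
        have hv2 : (r₀ : ℕ) < (j₀ : ℕ) := by
          simpa [Fin.lt_def] using h2
        have hv3 : (t : ℕ) < (p : ℕ) := by
          simpa [Fin.lt_def] using h
        omega
      · have h3 : j₀.succAbove r₀ = r₀.succ := Fin.succAbove_of_le_castSucc j₀ r₀ h2
        rw [h3] at hr₀
        have hv1 : (r₀ : ℕ) + 1 = p := by rw [← hr₀]; rfl
        exact Or.inl ⟨hj, hv1⟩
    · have h1 : p.succAbove t = t.succ := Fin.succAbove_of_le_castSucc p t h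
      have hj : (j₀ : ℕ) = (t : ℕ) + 1 := by rw [← hj₀, h1]; rfl
      rcases lt_or_ge (Fin.castSucc r₀) j₀ with h2 | h2
      · have h3 : j₀.succAbove r₀ = Fin.castSucc r₀ := Fin.succAbove_of_castSucc_lt j₀ r₀ h2
        rw [h3] at hr₀
        have hv1 : (r₀ : ℕ) = p := by rw [← hr₀]; rfl
        exact Or.inr ⟨hj, hv1⟩
      · exfalso
        have h3 : j₀.succAbove r₀ = r₀.succ := Fin.succAbove_of_le_castSucc j₀ r₀ h2
        rw [h3] at hr₀
        have hv1 : (r₀ : ℕ) + 1 = p := by rw [← hr₀]; rfl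
        have hv2 : (j₀ : ℕ) ≤ (r₀ : ℕ) := by
          simpa [Fin.le_def] using h2
        have hv3 : (p : ℕ) ≤ (t : ℕ) := by
          simpa [Fin.le_def] using h
        omega
  rw [neg_one_pow_eq_pow_mod_two, @neg_one_pow_eq_pow_mod_two _ _ ((p : ℕ) + (j₀ : ℕ) + 1)]
  congr 1
  rcases hfacts with ⟨h1, h2⟩ | ⟨h1, h2⟩ <;> omega

lemma cramer_identity_P (p : Fin (m + 2)) (t : Fin (m + 1)) :
    ∑ k : Fin (m + 1), ((-1 : ℤ) ^ ((k : ℕ) + (t : ℕ))) •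
        ((cofM p t k).det * MvPolynomial.X (k, p))
      = ((-1 : ℤ) ^ ((p : ℕ) + ((p.succAbove t : Fin (m + 2)) : ℕ) + 1)) •
          (XM (p.succAbove t)).det := by
  set j₀ : Fin (m + 2) := p.succAbove t with hj₀def
  have hj₀ : p.succAbove t = j₀ := rfl
  obtain ⟨r₀, hr₀⟩ := Fin.exists_succAbove_eq (show p ≠ j₀ from (Fin.succAbove_ne p t).symm)
  set B := (XM p).updateCol t (fun i => MvPolynomial.X (i, p)) with hBdef
  -- Step 1: LHS equals det B (column expansion)
  have hsub : ∀ k : Fin (m + 1), B.submatrix k.succAbove t.succAbove = cofM p t k := by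
    intro k
    ext r c
    rw [Matrix.submatrix_apply, hBdef, Matrix.updateCol_ne (Fin.succAbove_ne t c)]
    rfl
  have hstep1 : ∑ k : Fin (m + 1), ((-1 : ℤ) ^ ((k : ℕ) + (t : ℕ))) •
      ((cofM p t k).det * MvPolynomial.X (k, p)) = B.det := by
    rw [Matrix.det_succ_column B t]
    refine Finset.sum_congr rfl fun k _ => ?_
    rw [← hsub, hBdef, Matrix.updateCol_self, zsmul_eq_mul]
    push_cast
    ring
  -- Step 2: B is a column permutation of XM j₀
  set π : Equiv.Perm (Fin (m + 1)) := t.cycleRange.trans r₀.cycleRange.symm with hπdef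
  have hBeq : B = (XM j₀).submatrix id ⇑π := by
    refine Matrix.ext fun k s => ?_
    rw [Matrix.submatrix_apply, id_eq]
    rcases eq_or_ne s t with rfl | hst
    · have hπt : π s = r₀ := by
        rw [hπdef]
        simp [Fin.cycleRange_self]
      rw [hπt, hBdef, Matrix.updateCol_self]
      show MvPolynomial.X (k, p) = XM j₀ k r₀
      rw [show XM j₀ k r₀ = MvPolynomial.X (k, j₀.succAbove r₀) from rfl, hr₀]
    · obtain ⟨u, hu⟩ := Fin.exists_succAbove_eq hst
      have hπs : π s = r₀.succAbove u := by
        rw [hπdef, ← hu]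
        simp [Fin.cycleRange_succAbove, Fin.cycleRange_symm_succ]
      rw [hπs, hBdef, Matrix.updateCol_ne hst]
      show MvPolynomial.X (k, p.succAbove s) = MvPolynomial.X (k, j₀.succAbove (r₀.succAbove u))
      rw [succAbove_succAbove_key hj₀ hr₀ u, hu]
  -- Step 3: determinant under column permutation
  have hπmul : π = r₀.cycleRange⁻¹ * t.cycleRange := rfl
  have hsignu : Equiv.Perm.sign π = (-1 : ℤˣ) ^ ((r₀ : ℕ) + (t : ℕ)) := by
    rw [hπmul, _root_.map_mul, Equiv.Perm.sign_inv, Fin.sign_cycleRange, Fin.sign_cycleRange,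
      ← pow_add]
  have hstep2 : B.det = ((-1 : ℤ) ^ ((r₀ : ℕ) + (t : ℕ))) • (XM j₀).det := by
    rw [hBeq, Matrix.det_permute', zsmul_eq_mul]
    congr 1
    rw [hsignu]
    push_cast
    ring
  rw [hstep1, hstep2, sign_parity_key hj₀ hr₀]

end PSide2

section DSide

variable {D : Type*} [DivisionRing D] {m : ℕ} (b : Fin (m + 1) → Fin (m + 2) → D)
variable (hcomm : ∀ i k : Fin (m + 1), i ≠ k → ∀ j l : Fin (m + 2),
  b i j * b k l = b k l * b i j)

lemma phi_XM (p : Fin (m + 2)) : PhiHom b (XM p).det = cartierFoataDet b p :=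
  phi_det_full b p.succAbove

include hcomm

lemma adj_identity_D (p : Fin (m + 2)) (t s : Fin (m + 1)) :
    ∑ k : Fin (m + 1), (-1 : D) ^ ((k : ℕ) + (t : ℕ)) *
        (PhiHom b (cofM p t k).det * b k (p.succAbove s))
      = if t = s then cartierFoataDet b p else 0 := by
  have hterm : ∀ k : Fin (m + 1),
      PhiHom b (((-1 : ℤ) ^ ((k : ℕ) + (t : ℕ))) •
        ((cofM p t k).det * MvPolynomial.X (k, p.succAbove s)))
      = (-1 : D) ^ ((k : ℕ) + (t : ℕ)) *
          (PhiHom b (cofM p t k).det * b k (p.succAbove s)) := by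
    intro k
    rw [map_zsmul,
      show PhiHom b ((cofM p t k).det * MvPolynomial.X (k, p.succAbove s))
        = PhiHom b (cofM p t k).det * b k (p.succAbove s) from
        phi_det_minor_mul b hcomm k (fun s' => p.succAbove (t.succAbove s')) (p.succAbove s),
      zsmul_eq_mul]
    push_cast
    rfl
  have h := congrArg (PhiHom b) (adj_identity_P p t s)
  rw [map_sum] at h
  calc ∑ k : Fin (m + 1), (-1 : D) ^ ((k : ℕ) + (t : ℕ)) *
        (PhiHom b (cofM p t k).det * b k (p.succAbove s))
      = ∑ k : Fin (m + 1), PhiHom b (((-1 : ℤ) ^ ((k : ℕ) + (t : ℕ))) •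
          ((cofM p t k).det * MvPolynomial.X (k, p.succAbove s))) :=
        Finset.sum_congr rfl fun k _ => (hterm k).symm
    _ = PhiHom b (if t = s then (XM p).det else 0) := h
    _ = if t = s then cartierFoataDet b p else 0 := by
        rw [apply_ite (PhiHom b), map_zero, phi_XM]

lemma cramer_identity_D (p : Fin (m + 2)) (t : Fin (m + 1)) :
    ∑ k : Fin (m + 1), (-1 : D) ^ ((k : ℕ) + (t : ℕ)) *
        (PhiHom b (cofM p t k).det * b k p)
      = (-1 : D) ^ ((p : ℕ) + ((p.succAbove t : Fin (m + 2)) : ℕ) + 1) *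
          cartierFoataDet b (p.succAbove t) := by
  have hterm : ∀ k : Fin (m + 1),
      PhiHom b (((-1 : ℤ) ^ ((k : ℕ) + (t : ℕ))) •
        ((cofM p t k).det * MvPolynomial.X (k, p)))
      = (-1 : D) ^ ((k : ℕ) + (t : ℕ)) * (PhiHom b (cofM p t k).det * b k p) := by
    intro k
    rw [map_zsmul,
      show PhiHom b ((cofM p t k).det * MvPolynomial.X (k, p))
        = PhiHom b (cofM p t k).det * b k p from
        phi_det_minor_mul b hcomm k (fun s' => p.succAbove (t.succAbove s')) p,
      zsmul_eq_mul]
    push_cast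
    rfl
  have h := congrArg (PhiHom b) (cramer_identity_P p t)
  rw [map_sum] at h
  calc ∑ k : Fin (m + 1), (-1 : D) ^ ((k : ℕ) + (t : ℕ)) *
        (PhiHom b (cofM p t k).det * b k p)
      = ∑ k : Fin (m + 1), PhiHom b (((-1 : ℤ) ^ ((k : ℕ) + (t : ℕ))) •
          ((cofM p t k).det * MvPolynomial.X (k, p))) :=
        Finset.sum_congr rfl fun k _ => (hterm k).symm
    _ = PhiHom b (((-1 : ℤ) ^ ((p : ℕ) + ((p.succAbove t : Fin (m + 2)) : ℕ) + 1)) •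
          (XM (p.succAbove t)).det) := h
    _ = (-1 : D) ^ ((p : ℕ) + ((p.succAbove t : Fin (m + 2)) : ℕ) + 1) *
          cartierFoataDet b (p.succAbove t) := by
        rw [map_zsmul, phi_XM, zsmul_eq_mul]
        push_cast
        rfl

lemma adj_mul (p : Fin (m + 2)) (t : Fin (m + 1)) (w : Fin (m + 1) → D) :
    ∑ k : Fin (m + 1), (-1 : D) ^ ((k : ℕ) + (t : ℕ)) *
        (PhiHom b (cofM p t k).det * (∑ s, b k (p.succAbove s) * w s))
      = cartierFoataDet b p * w t := by
  have step1 : ∀ k : Fin (m + 1), (-1 : D) ^ ((k : ℕ) + (t : ℕ)) *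
      (PhiHom b (cofM p t k).det * (∑ s, b k (p.succAbove s) * w s))
      = ∑ s, ((-1 : D) ^ ((k : ℕ) + (t : ℕ)) *
          (PhiHom b (cofM p t k).det * b k (p.succAbove s))) * w s := by
    intro k
    simp only [Finset.mul_sum, mul_assoc]
  rw [Finset.sum_congr rfl fun k _ => step1 k, Finset.sum_comm]
  have step2 : ∀ s : Fin (m + 1),
      ∑ k : Fin (m + 1), ((-1 : D) ^ ((k : ℕ) + (t : ℕ)) *
          (PhiHom b (cofM p t k).det * b k (p.succAbove s))) * w s
      = (if t = s then cartierFoataDet b p else 0) * w s := by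
    intro s
    rw [← Finset.sum_mul, adj_identity_D b hcomm p t s]
  rw [Finset.sum_congr rfl fun s _ => step2 s]
  simp [Finset.sum_ite_eq]

lemma adj_cancel (p : Fin (m + 2)) (z : Fin (m + 1) → D)
    (hz : ∀ k, ∑ s, b k (p.succAbove s) * z s = 0) (t : Fin (m + 1)) :
    cartierFoataDet b p * z t = 0 := by
  rw [← adj_mul b hcomm p t z]
  apply Finset.sum_eq_zero
  intro k _
  rw [hz k, mul_zero, mul_zero]

lemma adj_solve (p : Fin (m + 2)) (y : Fin (m + 1) → D)
    (hy : ∀ k, ∑ s, b k (p.succAbove s) * y s = b k p) (t : Fin (m + 1)) :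
    cartierFoataDet b p * y t
      = (-1 : D) ^ ((p : ℕ) + ((p.succAbove t : Fin (m + 2)) : ℕ) + 1) *
          cartierFoataDet b (p.succAbove t) := by
  rw [← adj_mul b hcomm p t y, ← cramer_identity_D b hcomm p t]
  exact Finset.sum_congr rfl fun k _ => by rw [hy k]

lemma exists_solution (p : Fin (m + 2)) (hp : cartierFoataDet b p ≠ 0) :
    ∃ y : Fin (m + 1) → D, ∀ k, ∑ s, b k (p.succAbove s) * y s = b k p := by
  haveI : Module.Finite Dᵐᵒᵖ D := by
    refine ⟨⟨{1}, ?_⟩⟩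
    rw [Finset.coe_singleton, eq_top_iff]
    rintro x -
    rw [Submodule.mem_span_singleton]
    exact ⟨MulOpposite.op x, by simp [MulOpposite.smul_eq_mul_unop]⟩
  let f : (Fin (m + 1) → D) →ₗ[Dᵐᵒᵖ] (Fin (m + 1) → D) :=
    { toFun := fun z k => ∑ s, b k (p.succAbove s) * z s
      map_add' := fun z1 z2 => by
        funext k
        simp [Pi.add_apply, mul_add, Finset.sum_add_distrib]
      map_smul' := fun c z => by
        funext k
        simp only [Pi.smul_apply, MulOpposite.smul_eq_mul_unop, RingHom.id_apply]
        rw [Finset.sum_mul]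
        exact Finset.sum_congr rfl fun s _ => (mul_assoc _ _ _).symm }
  have hinj : Function.Injective f := by
    refine (injective_iff_map_eq_zero f).mpr fun z hz => ?_
    funext t
    have hz' : ∀ k, ∑ s, b k (p.succAbove s) * z s = 0 := fun k => congrFun hz k
    have h := adj_cancel b hcomm p z hz' t
    exact (mul_eq_zero.mp h).resolve_left hp
  have hsurj : Function.Surjective f := LinearMap.injective_iff_surjective.mp hinj
  obtain ⟨y, hy⟩ := hsurj fun k => b k p
  exact ⟨y, fun k => congrFun hy k⟩

end DSide

section Final

variable {D : Type*} [DivisionRing D] {m : ℕ} (b : Fin (m + 1) → Fin (m + 2) → D)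
variable (hcomm : ∀ i k : Fin (m + 1), i ≠ k → ∀ j l : Fin (m + 2),
  b i j * b k l = b k l * b i j)

include hcomm

lemma kernel_mem (p : Fin (m + 2)) (hp : cartierFoataDet b p ≠ 0) (k : Fin (m + 1)) :
    ∑ j : Fin (m + 2), b k j *
        ((-1 : D) ^ (j : ℕ) * ((cartierFoataDet b p)⁻¹ * cartierFoataDet b j)) = 0 := by
  obtain ⟨y, hy⟩ := exists_solution b hcomm p hp
  have hform : ∀ t : Fin (m + 1), (cartierFoataDet b p)⁻¹ * cartierFoataDet b (p.succAbove t)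
      = (-1 : D) ^ ((p : ℕ) + ((p.succAbove t : Fin (m + 2)) : ℕ) + 1) * y t := by
    intro t
    have h1 := adj_solve b hcomm p y hy t
    have hsq : (-1 : D) ^ ((p : ℕ) + ((p.succAbove t : Fin (m + 2)) : ℕ) + 1) *
        (-1 : D) ^ ((p : ℕ) + ((p.succAbove t : Fin (m + 2)) : ℕ) + 1) = 1 := by
      rw [← pow_add]
      exact Even.neg_one_pow ⟨_, rfl⟩
    have h2 : cartierFoataDet b (p.succAbove t)
        = (-1 : D) ^ ((p : ℕ) + ((p.succAbove t : Fin (m + 2)) : ℕ) + 1) *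
            (cartierFoataDet b p * y t) := by
      rw [h1, ← mul_assoc, hsq, one_mul]
    rw [h2, ← mul_assoc,
      ← ((Commute.neg_one_left ((cartierFoataDet b p)⁻¹)).pow_left _).eq, mul_assoc,
      ← mul_assoc (cartierFoataDet b p)⁻¹, inv_mul_cancel₀ hp, one_mul]
  rw [Fin.sum_univ_succAbove (fun j => b k j *
    ((-1 : D) ^ (j : ℕ) * ((cartierFoataDet b p)⁻¹ * cartierFoataDet b j))) p]
  have hterm : ∀ t : Fin (m + 1), b k (p.succAbove t) *
      ((-1 : D) ^ ((p.succAbove t : Fin (m + 2)) : ℕ) *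
        ((cartierFoataDet b p)⁻¹ * cartierFoataDet b (p.succAbove t)))
      = (-1 : D) ^ ((p : ℕ) + 1) * (b k (p.succAbove t) * y t) := by
    intro t
    rw [hform t, ← mul_assoc ((-1 : D) ^ ((p.succAbove t : Fin (m + 2)) : ℕ)), ← pow_add]
    have hpar : (-1 : D) ^ (((p.succAbove t : Fin (m + 2)) : ℕ) +
        ((p : ℕ) + ((p.succAbove t : Fin (m + 2)) : ℕ) + 1)) = (-1 : D) ^ ((p : ℕ) + 1) := by
      rw [neg_one_pow_eq_pow_mod_two, @neg_one_pow_eq_pow_mod_two D _ ((p : ℕ) + 1)]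
      congr 1
      omega
    rw [hpar, ← mul_assoc, ← ((Commute.neg_one_left (b k (p.succAbove t))).pow_left _).eq,
      mul_assoc]
  rw [Finset.sum_congr rfl fun t _ => hterm t, ← Finset.mul_sum, hy k,
    inv_mul_cancel₀ hp, mul_one]
  rw [((Commute.neg_one_left (b k p)).pow_left (p : ℕ)).eq.symm]
  rw [pow_succ, mul_neg_one, neg_mul]
  exact add_neg_cancel _

lemma star_identity (p q : Fin (m + 2)) (hp : cartierFoataDet b p ≠ 0)
    (hq : cartierFoataDet b q ≠ 0) (i : Fin (m + 2)) :
    (cartierFoataDet b q)⁻¹ * cartierFoataDet b i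
      = (cartierFoataDet b p)⁻¹ * cartierFoataDet b i *
          ((cartierFoataDet b q)⁻¹ * cartierFoataDet b p) := by
  set lam := (cartierFoataDet b q)⁻¹ * cartierFoataDet b p with hlam
  set v : Fin (m + 2) → D := fun j =>
    (-1 : D) ^ (j : ℕ) * ((cartierFoataDet b q)⁻¹ * cartierFoataDet b j)
      - (-1 : D) ^ (j : ℕ) * ((cartierFoataDet b p)⁻¹ * cartierFoataDet b j) * lam with hv
  have hker : ∀ k, ∑ j, b k j * v j = 0 := by
    intro k
    have h1 := kernel_mem b hcomm q hq k
    have h2 := kernel_mem b hcomm p hp k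
    calc ∑ j, b k j * v j
        = ∑ j, (b k j * ((-1 : D) ^ (j : ℕ) *
              ((cartierFoataDet b q)⁻¹ * cartierFoataDet b j))
            - (b k j * ((-1 : D) ^ (j : ℕ) *
              ((cartierFoataDet b p)⁻¹ * cartierFoataDet b j))) * lam) := by
          refine Finset.sum_congr rfl fun j _ => ?_
          rw [hv]
          show b k j * ((-1 : D) ^ (j : ℕ) *
              ((cartierFoataDet b q)⁻¹ * cartierFoataDet b j)
            - (-1 : D) ^ (j : ℕ) *
              ((cartierFoataDet b p)⁻¹ * cartierFoataDet b j) * lam) = _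
          rw [mul_sub]
          congr 1
          exact (mul_assoc _ _ _).symm
      _ = 0 := by
          rw [Finset.sum_sub_distrib, ← Finset.sum_mul, h1, h2, zero_mul, sub_zero]
  have hvp : v p = 0 := by
    rw [hv]
    show (-1 : D) ^ (p : ℕ) * ((cartierFoataDet b q)⁻¹ * cartierFoataDet b p)
      - (-1 : D) ^ (p : ℕ) * ((cartierFoataDet b p)⁻¹ * cartierFoataDet b p) * lam = 0
    rw [inv_mul_cancel₀ hp, mul_one, ← hlam, sub_self]
  have hz : ∀ s : Fin (m + 1), v (p.succAbove s) = 0 := by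
    have hsys : ∀ k, ∑ s, b k (p.succAbove s) * v (p.succAbove s) = 0 := by
      intro k
      have h := hker k
      rw [Fin.sum_univ_succAbove (fun j => b k j * v j) p, hvp, mul_zero, zero_add] at h
      exact h
    intro s
    have h := adj_cancel b hcomm p (fun s => v (p.succAbove s)) hsys s
    exact (mul_eq_zero.mp h).resolve_left hp
  have hvi : v i = 0 := by
    rcases eq_or_ne i p with rfl | hne
    · exact hvp
    · obtain ⟨s, rfl⟩ := Fin.exists_succAbove_eq hne
      exact hz s
  rw [hv] at hvi
  have h3 := sub_eq_zero.mp hvi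
  rw [mul_assoc] at h3
  exact mul_left_cancel₀ (pow_ne_zero _ (neg_ne_zero.mpr one_ne_zero)) h3

end Final

end CFProof

theorem commuting_family_of_CartierFoata_minors
    {D : Type*} [DivisionRing D] (n : ℕ) (hn : 2 ≤ n)
    (b : Fin n → Fin (n + 1) → D)
    (hcomm : ∀ i k : Fin n, i ≠ k → ∀ j l : Fin (n + 1),
      b i j * b k l = b k l * b i j)
    (h0 : cartierFoataDet b 0 ≠ 0) :
    ∀ i j : Fin (n + 1),
      (cartierFoataDet b 0)⁻¹ * cartierFoataDet b i *
          ((cartierFoataDet b 0)⁻¹ * cartierFoataDet b j) =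
        (cartierFoataDet b 0)⁻¹ * cartierFoataDet b j *
          ((cartierFoataDet b 0)⁻¹ * cartierFoataDet b i) := by
  obtain ⟨m, rfl⟩ : ∃ m, n = m + 1 := ⟨n - 1, by omega⟩
  intro i j
  by_cases hi : cartierFoataDet b i = 0
  · simp [hi]
  by_cases hj : cartierFoataDet b j = 0
  · simp [hj]
  have hstar := CFProof.star_identity b hcomm 0 j h0 hj i
  have key : cartierFoataDet b i * ((cartierFoataDet b 0)⁻¹ * cartierFoataDet b j)
      = cartierFoataDet b j * ((cartierFoataDet b 0)⁻¹ * cartierFoataDet b i) := by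
    have h1 : cartierFoataDet b i
        = cartierFoataDet b j * ((cartierFoataDet b 0)⁻¹ * cartierFoataDet b i *
            ((cartierFoataDet b j)⁻¹ * cartierFoataDet b 0)) := by
      rw [← hstar, ← mul_assoc, mul_inv_cancel₀ hj, one_mul]
    calc cartierFoataDet b i * ((cartierFoataDet b 0)⁻¹ * cartierFoataDet b j)
        = cartierFoataDet b j * ((cartierFoataDet b 0)⁻¹ * cartierFoataDet b i *
            ((cartierFoataDet b j)⁻¹ * cartierFoataDet b 0)) *
            ((cartierFoataDet b 0)⁻¹ * cartierFoataDet b j) := by rw [← h1]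
      _ = cartierFoataDet b j * ((cartierFoataDet b 0)⁻¹ * cartierFoataDet b i) := by
          simp only [mul_assoc]
          rw [show cartierFoataDet b 0 * ((cartierFoataDet b 0)⁻¹ *
              cartierFoataDet b j) = cartierFoataDet b j from by
            rw [← mul_assoc, mul_inv_cancel₀ h0, one_mul]]
          rw [inv_mul_cancel₀ hj, mul_one]
  rw [mul_assoc, key, ← mul_assoc]
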